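/- arXiv:quant-ph/9803046 — 4 statements merged into one kernel-verified Lean document; each statement's English description precedes it below -/
import Mathlib

section
/- Suppose the measurement is retrodictively unbiased. Then the expectation values of the mixed commutators in the state Ψ are: ⟪Ψ, [x_i, μXf] Ψ⟫ = 0, ⟪Ψ, [μXf, p_i] Ψ⟫ = i ħ, ⟪Ψ, [x_i, μPf] Ψ⟫ = i ħ, and ⟪Ψ, [μPf, p_i] Ψ⟫ = 0. -/
open scoped ComplexInnerProductSpace

noncomputable section

/-- The commutator of two operators. -/
def commOp {E : Type*} [NormedAddCommGroup E] [InnerProductSpace ℂ E]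
    (A B : E →ₗ[ℂ] E) : E →ₗ[ℂ] E := A ∘ₗ B - B ∘ₗ A

/-- The standard deviation of the observable `A` in the state `Ψ`. -/
def stddev {E : Type*} [NormedAddCommGroup E] [InnerProductSpace ℂ E]
    (A : E →ₗ[ℂ] E) (Ψ : E) : ℝ :=
  Real.sqrt (‖A Ψ‖ ^ 2 - (Complex.re ⟪Ψ, A Ψ⟫) ^ 2)

/-- Polarization: if the quadratic form of `T` vanishes on a submodule, so does the
sesquilinear form. -/
lemma polar_zero {E : Type*} [NormedAddCommGroup E] [InnerProductSpace ℂ E]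
    (T : E →ₗ[ℂ] E) (S : Submodule ℂ E) (h : ∀ χ ∈ S, ⟪χ, T χ⟫ = 0) :
    ∀ x ∈ S, ∀ y ∈ S, ⟪x, T y⟫ = 0 := by
  have h' : ∀ χ ∈ S, ⟪T χ, χ⟫ = 0 := by
    intro χ hχ
    rw [← inner_conj_symm, h χ hχ, map_zero]
  intro x hx y hy
  rw [← inner_conj_symm, inner_map_polarization,
    h' _ (S.add_mem hx hy), h' _ (S.sub_mem hx hy),
    h' _ (S.add_mem hx (S.smul_mem _ hy)), h' _ (S.sub_mem hx (S.smul_mem _ hy))]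
  simp

/-- For a retrodictively unbiased measurement, the expectation values of the mixed
commutators of the initial system observables and the final pointer observables. -/
theorem retro_unbiased_mixed_commutator_expectations
    {E : Type*} [NormedAddCommGroup E] [InnerProductSpace ℂ E]
    (hbar : ℝ) (hhbar : 0 < hbar)
    (xi pi xf pf muXf muPf : E →ₗ[ℂ] E)
    (hxi : xi.IsSymmetric) (hpi : pi.IsSymmetric)
    (hxf : xf.IsSymmetric) (hpf : pf.IsSymmetric)
    (hmuXf : muXf.IsSymmetric) (hmuPf : muPf.IsSymmetric)
    (hccr : commOp xi pi = (Complex.I * (hbar : ℂ)) • (LinearMap.id : E →ₗ[ℂ] E))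
    (S : Submodule ℂ E)
    (hxiS : ∀ χ ∈ S, xi χ ∈ S) (hpiS : ∀ χ ∈ S, pi χ ∈ S)
    (Ψ : E) (hΨS : Ψ ∈ S) (hΨ : ‖Ψ‖ = 1)
    (hretroX : ∀ χ ∈ S, ⟪χ, (muXf - xi) χ⟫ = 0)
    (hretroP : ∀ χ ∈ S, ⟪χ, (muPf - pi) χ⟫ = 0)
    :
    ⟪Ψ, commOp xi muXf Ψ⟫ = 0 ∧
    ⟪Ψ, commOp muXf pi Ψ⟫ = Complex.I * (hbar : ℂ) ∧
    ⟪Ψ, commOp xi muPf Ψ⟫ = Complex.I * (hbar : ℂ) ∧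
    ⟪Ψ, commOp muPf pi Ψ⟫ = 0 := by
  -- sesquilinear forms of the error operators vanish on S
  have hX : ∀ x ∈ S, ∀ y ∈ S, ⟪x, muXf y⟫ = ⟪x, xi y⟫ := by
    intro x hx y hy
    have := polar_zero (muXf - xi) S hretroX x hx y hy
    simp only [LinearMap.sub_apply, inner_sub_right, sub_eq_zero] at this
    exact this
  have hP : ∀ x ∈ S, ∀ y ∈ S, ⟪x, muPf y⟫ = ⟪x, pi y⟫ := by
    intro x hx y hy
    have := polar_zero (muPf - pi) S hretroP x hx y hy
    simp only [LinearMap.sub_apply, inner_sub_right, sub_eq_zero] at this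
    exact this
  have hXl : ∀ x ∈ S, ∀ y ∈ S, ⟪muXf x, y⟫ = ⟪xi x, y⟫ := by
    intro x hx y hy
    calc ⟪muXf x, y⟫ = starRingEnd ℂ ⟪y, muXf x⟫ := (inner_conj_symm _ _).symm
      _ = starRingEnd ℂ ⟪y, xi x⟫ := by rw [hX y hy x hx]
      _ = ⟪xi x, y⟫ := inner_conj_symm _ _
  have hPl : ∀ x ∈ S, ∀ y ∈ S, ⟪muPf x, y⟫ = ⟪pi x, y⟫ := by
    intro x hx y hy
    calc ⟪muPf x, y⟫ = starRingEnd ℂ ⟪y, muPf x⟫ := (inner_conj_symm _ _).symm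
      _ = starRingEnd ℂ ⟪y, pi x⟫ := by rw [hP y hy x hx]
      _ = ⟪pi x, y⟫ := inner_conj_symm _ _
  have hΨΨ : ⟪Ψ, Ψ⟫ = 1 := by
    rw [inner_self_eq_norm_sq_to_K, hΨ]; norm_num
  have hxipi : ⟪Ψ, xi (pi Ψ)⟫ - ⟪Ψ, pi (xi Ψ)⟫ = Complex.I * (hbar : ℂ) := by
    have := congrArg (fun (T : E →ₗ[ℂ] E) => ⟪Ψ, T Ψ⟫) hccr
    simp only [commOp, LinearMap.sub_apply, LinearMap.comp_apply, inner_sub_right,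
      LinearMap.smul_apply, LinearMap.id_apply, inner_smul_right] at this
    rw [this, hΨΨ, mul_one]
  refine ⟨?_, ?_, ?_, ?_⟩
  · simp only [commOp, LinearMap.sub_apply, LinearMap.comp_apply, inner_sub_right]
    rw [← hxi Ψ (muXf Ψ), hX (xi Ψ) (hxiS Ψ hΨS) Ψ hΨS,
      hX Ψ hΨS (xi Ψ) (hxiS Ψ hΨS), ← hxi Ψ (xi Ψ), sub_self]
  · simp only [commOp, LinearMap.sub_apply, LinearMap.comp_apply, inner_sub_right]
    rw [hX Ψ hΨS (pi Ψ) (hpiS Ψ hΨS), ← hpi Ψ (muXf Ψ),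
      hX (pi Ψ) (hpiS Ψ hΨS) Ψ hΨS, hpi Ψ (xi Ψ)]
    exact hxipi
  · simp only [commOp, LinearMap.sub_apply, LinearMap.comp_apply, inner_sub_right]
    rw [← hxi Ψ (muPf Ψ), hP (xi Ψ) (hxiS Ψ hΨS) Ψ hΨS, hxi Ψ (pi Ψ),
      hP Ψ hΨS (xi Ψ) (hxiS Ψ hΨS)]
    exact hxipi
  · simp only [commOp, LinearMap.sub_apply, LinearMap.comp_apply, inner_sub_right]
    rw [hP Ψ hΨS (pi Ψ) (hpiS Ψ hΨS), ← hpi Ψ (muPf Ψ),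
      hP (pi Ψ) (hpiS Ψ hΨS) Ψ hΨS, hpi Ψ (pi Ψ), sub_self]

end
end

section
/- Generalized predictive error relationship (valid without any unbiasedness assumption): let x_f, p_f, μXf, μPf be symmetric operators on E with [x_f, p_f] = (i ħ) • id and [μXf, μPf] = [μXf, p_f] = [x_f, μPf] = 0. Then for every unit vector Ψ in E, ‖(μXf − x_f) Ψ‖ · ‖(μPf − p_f) Ψ‖ ≥ ħ/2. -/
open scoped ComplexInnerProductSpace

noncomputable section

/-- Generalized predictive error relationship, valid without any unbiasedness assumption:
if `[x_f, p_f] = (iħ) • id` and the final pointer observables commute with each other and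
with the final conjugate system observables, then for every unit vector `Ψ`,
`‖ε_Xf Ψ‖ · ‖ε_Pf Ψ‖ ≥ ħ/2`. -/
theorem generalized_predictive_error_relation
    {E : Type*} [NormedAddCommGroup E] [InnerProductSpace ℂ E]
    (hbar : ℝ) (hhbar : 0 < hbar)
    (xf pf muXf muPf : E →ₗ[ℂ] E)
    (hxf : xf.IsSymmetric) (hpf : pf.IsSymmetric)
    (hmuXf : muXf.IsSymmetric) (hmuPf : muPf.IsSymmetric)
    (hccr : commOp xf pf = (Complex.I * (hbar : ℂ)) • (LinearMap.id : E →ₗ[ℂ] E))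
    (h1 : commOp muXf muPf = 0) (h2 : commOp muXf pf = 0) (h3 : commOp xf muPf = 0)
    (Ψ : E) (hΨ : ‖Ψ‖ = 1) :
    hbar / 2 ≤ ‖(muXf - xf) Ψ‖ * ‖(muPf - pf) Ψ‖ := by
  set A := muXf - xf with hA
  set B := muPf - pf with hB
  have hAsym : A.IsSymmetric := hmuXf.sub hxf
  have hBsym : B.IsSymmetric := hmuPf.sub hpf
  have hcomm : commOp A B =
      commOp muXf muPf - commOp muXf pf - commOp xf muPf + commOp xf pf := by
    ext x
    simp only [commOp, hA, hB, LinearMap.sub_apply, LinearMap.add_apply,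
      LinearMap.comp_apply, map_sub]
    abel
  rw [h1, h2, h3, hccr] at hcomm
  simp only [zero_sub, sub_zero, neg_zero, zero_add] at hcomm
  -- key scalar identity
  set z : ℂ := ⟪A Ψ, B Ψ⟫ with hz
  have hconj : ⟪B Ψ, A Ψ⟫ = (starRingEnd ℂ) z := by
    rw [hz, ← inner_conj_symm]
  have hid : z - (starRingEnd ℂ) z = Complex.I * (hbar : ℂ) := by
    have h₁ : ⟪Ψ, commOp A B Ψ⟫ = z - (starRingEnd ℂ) z := by
      simp only [commOp, LinearMap.sub_apply, LinearMap.comp_apply, inner_sub_right]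
      rw [← hAsym Ψ (B Ψ), ← hBsym Ψ (A Ψ), hconj, hz]
    have h₂ : ⟪Ψ, commOp A B Ψ⟫ = Complex.I * (hbar : ℂ) := by
      rw [hcomm]
      simp only [LinearMap.smul_apply, LinearMap.id_apply, inner_smul_right]
      rw [inner_self_eq_norm_sq_to_K, hΨ]
      push_cast; ring
    rw [← h₁, h₂]
  have him : hbar = 2 * z.im := by
    have := congrArg Complex.im hid
    simp [Complex.sub_im, Complex.conj_im] at this
    linarith
  have hle : z.im ≤ ‖A Ψ‖ * ‖B Ψ‖ := by
    calc z.im ≤ |z.im| := le_abs_self _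
    _ ≤ ‖z‖ := Complex.abs_im_le_norm z
    _ = ‖z‖ := rfl
    _ ≤ ‖A Ψ‖ * ‖B Ψ‖ := norm_inner_le_norm _ _
  linarith

end
end

section
/- Suppose the measurement is both retrodictively and predictively unbiased. Then ⟪Ψ, [x_i, x_f] Ψ⟫ = 0, ⟪Ψ, [x_f, p_i] Ψ⟫ = i ħ, ⟪Ψ, [x_i, p_f] Ψ⟫ = i ħ, and ⟪Ψ, [p_f, p_i] Ψ⟫ = 0. -/
open scoped ComplexInnerProductSpace

noncomputable section

/-- A sesquilinear form vanishing on the diagonal of a complex subspace vanishes on it. -/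
lemma diag_zero_aux {E : Type*} [NormedAddCommGroup E] [InnerProductSpace ℂ E]
    (A : E →ₗ[ℂ] E) (S : Submodule ℂ E) (h : ∀ χ ∈ S, ⟪χ, A χ⟫ = 0) :
    ∀ x ∈ S, ∀ y ∈ S, ⟪x, A y⟫ = 0 := by
  intro x hx y hy
  have h1 := h (x + y) (S.add_mem hx hy)
  have h2 := h (x + Complex.I • y) (S.add_mem hx (S.smul_mem _ hy))
  simp only [map_add, map_smul, inner_add_add_self, inner_add_left, inner_add_right,
    inner_smul_left, inner_smul_right, h x hx, h y hy, Complex.conj_I] at h1 h2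
  have h3 : Complex.I * (⟪x, A y⟫ - ⟪y, A x⟫) = 0 := by linear_combination h2
  rcases mul_eq_zero.mp h3 with h | h
  · exact absurd h Complex.I_ne_zero
  · linear_combination (h1 + h) / 2

/-- For a measurement which is both retrodictively and predictively unbiased, the expectation
values of the mixed commutators of the initial and final system observables. -/
theorem unbiased_initial_final_commutator_expectations
    {E : Type*} [NormedAddCommGroup E] [InnerProductSpace ℂ E]
    (hbar : ℝ) (hhbar : 0 < hbar)
    (xi pi xf pf muXf muPf : E →ₗ[ℂ] E)
    (hxi : xi.IsSymmetric) (hpi : pi.IsSymmetric)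
    (hxf : xf.IsSymmetric) (hpf : pf.IsSymmetric)
    (hmuXf : muXf.IsSymmetric) (hmuPf : muPf.IsSymmetric)
    (hccr : commOp xi pi = (Complex.I * (hbar : ℂ)) • (LinearMap.id : E →ₗ[ℂ] E))
    (S : Submodule ℂ E)
    (hxiS : ∀ χ ∈ S, xi χ ∈ S) (hpiS : ∀ χ ∈ S, pi χ ∈ S)
    (Ψ : E) (hΨS : Ψ ∈ S) (hΨ : ‖Ψ‖ = 1)
    (hretroX : ∀ χ ∈ S, ⟪χ, (muXf - xi) χ⟫ = 0)
    (hretroP : ∀ χ ∈ S, ⟪χ, (muPf - pi) χ⟫ = 0)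
    (hpredX : ∀ χ ∈ S, ⟪χ, (muXf - xf) χ⟫ = 0)
    (hpredP : ∀ χ ∈ S, ⟪χ, (muPf - pf) χ⟫ = 0)
    :
    ⟪Ψ, commOp xi xf Ψ⟫ = 0 ∧
    ⟪Ψ, commOp xf pi Ψ⟫ = Complex.I * (hbar : ℂ) ∧
    ⟪Ψ, commOp xi pf Ψ⟫ = Complex.I * (hbar : ℂ) ∧
    ⟪Ψ, commOp pf pi Ψ⟫ = 0 := by
  -- The form of xf agrees with that of xi on S, similarly pf with pi.
  have hX : ∀ x ∈ S, ∀ y ∈ S, ⟪x, xf y⟫ = ⟪x, xi y⟫ := by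
    intro x hx y hy
    have h1 := diag_zero_aux (muXf - xi) S hretroX x hx y hy
    have h2 := diag_zero_aux (muXf - xf) S hpredX x hx y hy
    simp only [LinearMap.sub_apply, inner_sub_right] at h1 h2
    linear_combination h1 - h2
  have hP : ∀ x ∈ S, ∀ y ∈ S, ⟪x, pf y⟫ = ⟪x, pi y⟫ := by
    intro x hx y hy
    have h1 := diag_zero_aux (muPf - pi) S hretroP x hx y hy
    have h2 := diag_zero_aux (muPf - pf) S hpredP x hx y hy
    simp only [LinearMap.sub_apply, inner_sub_right] at h1 h2
    linear_combination h1 - h2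
  have hccr' : ⟪Ψ, xi (pi Ψ)⟫ - ⟪Ψ, pi (xi Ψ)⟫ = Complex.I * (hbar : ℂ) := by
    have := congrArg (fun (T : E →ₗ[ℂ] E) => ⟪Ψ, T Ψ⟫) hccr
    simp only [commOp, LinearMap.sub_apply, LinearMap.comp_apply, LinearMap.smul_apply,
      LinearMap.id_apply, inner_sub_right, inner_smul_right] at this
    rw [this, inner_self_eq_norm_sq_to_K, hΨ]
    norm_num
  refine ⟨?_, ?_, ?_, ?_⟩
  · simp only [commOp, LinearMap.sub_apply, LinearMap.comp_apply, inner_sub_right]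
    have e1 : ⟪Ψ, xi (xf Ψ)⟫ = ⟪xi Ψ, xi Ψ⟫ := by
      rw [← hxi Ψ (xf Ψ), hX (xi Ψ) (hxiS Ψ hΨS) Ψ hΨS]
    have e2 : ⟪Ψ, xf (xi Ψ)⟫ = ⟪xi Ψ, xi Ψ⟫ := by
      rw [hX Ψ hΨS (xi Ψ) (hxiS Ψ hΨS), ← hxi Ψ (xi Ψ)]
    rw [e1, e2, sub_self]
  · simp only [commOp, LinearMap.sub_apply, LinearMap.comp_apply, inner_sub_right]
    have e1 : ⟪Ψ, xf (pi Ψ)⟫ = ⟪Ψ, xi (pi Ψ)⟫ := hX Ψ hΨS (pi Ψ) (hpiS Ψ hΨS)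
    have e2 : ⟪Ψ, pi (xf Ψ)⟫ = ⟪Ψ, pi (xi Ψ)⟫ := by
      rw [← hpi Ψ (xf Ψ), hX (pi Ψ) (hpiS Ψ hΨS) Ψ hΨS, hpi Ψ (xi Ψ)]
    rw [e1, e2, hccr']
  · simp only [commOp, LinearMap.sub_apply, LinearMap.comp_apply, inner_sub_right]
    have e1 : ⟪Ψ, xi (pf Ψ)⟫ = ⟪Ψ, xi (pi Ψ)⟫ := by
      rw [← hxi Ψ (pf Ψ), hP (xi Ψ) (hxiS Ψ hΨS) Ψ hΨS, hxi Ψ (pi Ψ)]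
    have e2 : ⟪Ψ, pf (xi Ψ)⟫ = ⟪Ψ, pi (xi Ψ)⟫ := hP Ψ hΨS (xi Ψ) (hxiS Ψ hΨS)
    rw [e1, e2, hccr']
  · simp only [commOp, LinearMap.sub_apply, LinearMap.comp_apply, inner_sub_right]
    have e1 : ⟪Ψ, pf (pi Ψ)⟫ = ⟪Ψ, pi (pi Ψ)⟫ := hP Ψ hΨS (pi Ψ) (hpiS Ψ hΨS)
    have e2 : ⟪Ψ, pi (pf Ψ)⟫ = ⟪Ψ, pi (pi Ψ)⟫ := by
      rw [← hpi Ψ (pf Ψ), hP (pi Ψ) (hpiS Ψ hΨS) Ψ hΨS, hpi Ψ (pi Ψ)]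
    rw [e1, e2, sub_self]
end
end

section
/- Variance decomposition for the pointer observables: suppose the measurement is retrodictively unbiased. Then re ⟪Ψ, μXf Ψ⟫ = re ⟪Ψ, x_i Ψ⟫ and re ⟪Ψ, μPf Ψ⟫ = re ⟪Ψ, p_i Ψ⟫, and the variances satisfy (Δ_Ψ μXf)² = (Δ_Ψ x_i)² + (Δei x)² and (Δ_Ψ μPf)² = (Δ_Ψ p_i)² + (Δei p)². -/
open scoped ComplexInnerProductSpace

noncomputable section

private lemma stddev_sq {E : Type*} [NormedAddCommGroup E] [InnerProductSpace ℂ E]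
    (A : E →ₗ[ℂ] E) (Ψ : E) (hΨ : ‖Ψ‖ = 1) :
    (stddev A Ψ) ^ 2 = ‖A Ψ‖ ^ 2 - (Complex.re ⟪Ψ, A Ψ⟫) ^ 2 := by
  have h1 : (Complex.re ⟪Ψ, A Ψ⟫) ^ 2 ≤ ‖A Ψ‖ ^ 2 := by
    have h2 : |Complex.re ⟪Ψ, A Ψ⟫| ≤ ‖(⟪Ψ, A Ψ⟫ : ℂ)‖ := Complex.abs_re_le_norm _
    have h3 : ‖(⟪Ψ, A Ψ⟫ : ℂ)‖ ≤ ‖Ψ‖ * ‖A Ψ‖ := norm_inner_le_norm _ _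
    rw [hΨ, one_mul] at h3
    nlinarith [abs_nonneg (Complex.re ⟪Ψ, A Ψ⟫), sq_abs (Complex.re ⟪Ψ, A Ψ⟫)]
  exact Real.sq_sqrt (by linarith)

lemma aux_decomp {E : Type*} [NormedAddCommGroup E] [InnerProductSpace ℂ E]
    (A eps : E →ₗ[ℂ] E) (hA : A.IsSymmetric) (heps : eps.IsSymmetric)
    (S : Submodule ℂ E) (hAS : ∀ χ ∈ S, A χ ∈ S)
    (hz : ∀ χ ∈ S, ⟪χ, eps χ⟫ = 0)
    (Ψ : E) (hΨS : Ψ ∈ S) (hΨ : ‖Ψ‖ = 1) :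
    Complex.re ⟪Ψ, (A + eps) Ψ⟫ = Complex.re ⟪Ψ, A Ψ⟫ ∧
    (stddev (A + eps) Ψ) ^ 2 = (stddev A Ψ) ^ 2 + ‖eps Ψ‖ ^ 2 := by
  have hmean : ⟪Ψ, (A + eps) Ψ⟫ = ⟪Ψ, A Ψ⟫ := by
    rw [LinearMap.add_apply, inner_add_right, hz Ψ hΨS, add_zero]
  have hsum : ⟪Ψ + A Ψ, eps (Ψ + A Ψ)⟫ = 0 := hz _ (S.add_mem hΨS (hAS Ψ hΨS))
  rw [map_add, inner_add_left, inner_add_right, inner_add_right, hz Ψ hΨS,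
    hz (A Ψ) (hAS Ψ hΨS)] at hsum
  have hconj : ⟪Ψ, eps (A Ψ)⟫ = starRingEnd ℂ ⟪A Ψ, eps Ψ⟫ := by
    rw [← heps Ψ (A Ψ), ← inner_conj_symm]
  have hcross : Complex.re ⟪A Ψ, eps Ψ⟫ = 0 := by
    have : ⟪A Ψ, eps Ψ⟫ + starRingEnd ℂ ⟪A Ψ, eps Ψ⟫ = 0 := by
      rw [← hconj]; linear_combination hsum
    have h2 := congrArg Complex.re this
    rw [Complex.add_re, Complex.conj_re, Complex.zero_re] at h2
    linarith
  have hnorm : ‖(A + eps) Ψ‖ ^ 2 = ‖A Ψ‖ ^ 2 + ‖eps Ψ‖ ^ 2 := by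
    have hcross' : RCLike.re ⟪A Ψ, eps Ψ⟫ = 0 := hcross
    rw [LinearMap.add_apply, @norm_add_sq ℂ _ _ _ _ (A Ψ) (eps Ψ), hcross']
    ring
  refine ⟨by rw [hmean], ?_⟩
  rw [stddev_sq _ _ hΨ, stddev_sq _ _ hΨ, hmean, hnorm]
  ring


/-- Variance decomposition for the pointer observables of a retrodictively unbiased
measurement: the pointer means equal the initial system means, and the pointer variances
are the sums of the intrinsic variances and the squared rms errors of retrodiction. -/
theorem pointer_variance_decomposition
    {E : Type*} [NormedAddCommGroup E] [InnerProductSpace ℂ E]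
    (hbar : ℝ) (hhbar : 0 < hbar)
    (xi pi xf pf muXf muPf : E →ₗ[ℂ] E)
    (hxi : xi.IsSymmetric) (hpi : pi.IsSymmetric)
    (hxf : xf.IsSymmetric) (hpf : pf.IsSymmetric)
    (hmuXf : muXf.IsSymmetric) (hmuPf : muPf.IsSymmetric)
    (hccr : commOp xi pi = (Complex.I * (hbar : ℂ)) • (LinearMap.id : E →ₗ[ℂ] E))
    (S : Submodule ℂ E)
    (hxiS : ∀ χ ∈ S, xi χ ∈ S) (hpiS : ∀ χ ∈ S, pi χ ∈ S)
    (Ψ : E) (hΨS : Ψ ∈ S) (hΨ : ‖Ψ‖ = 1)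
    (hretroX : ∀ χ ∈ S, ⟪χ, (muXf - xi) χ⟫ = 0)
    (hretroP : ∀ χ ∈ S, ⟪χ, (muPf - pi) χ⟫ = 0)
    :
    Complex.re ⟪Ψ, muXf Ψ⟫ = Complex.re ⟪Ψ, xi Ψ⟫ ∧
    Complex.re ⟪Ψ, muPf Ψ⟫ = Complex.re ⟪Ψ, pi Ψ⟫ ∧
    (stddev muXf Ψ) ^ 2 = (stddev xi Ψ) ^ 2 + ‖(muXf - xi) Ψ‖ ^ 2 ∧
    (stddev muPf Ψ) ^ 2 = (stddev pi Ψ) ^ 2 + ‖(muPf - pi) Ψ‖ ^ 2 := by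
  have hX := aux_decomp xi (muXf - xi) hxi (hmuXf.sub hxi) S hxiS hretroX Ψ hΨS hΨ
  have hP := aux_decomp pi (muPf - pi) hpi (hmuPf.sub hpi) S hpiS hretroP Ψ hΨS hΨ
  have eX : xi + (muXf - xi) = muXf := by abel
  have eP : pi + (muPf - pi) = muPf := by abel
  rw [eX] at hX
  rw [eP] at hP
  exact ⟨hX.1, hP.1, hX.2, hP.2⟩

end
end
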